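/- For every constant β ≥ 1, the redundancy of S^β is lower bounded by R_S^β(x_{1:n}) ≥ CL_w(𝒜) − m·ln β + Σ_{j∈𝒜} (1/2)·ln(n_j/(2π)) + n·ln(1 + β/n) + (β − 1/2)·ln(n/β + 1) + (1 − ln√(2π)) − (1 − ln√(2π))·(m + 2). -/

import Mathlib

open Finset Real Filter

variable {𝒳 : Type*} [Fintype 𝒳] [DecidableEq 𝒳]

/-- `n_i^t`: number of occurrences of symbol `i` among the first `t` symbols
`x 0, …, x (t-1)` (the paper's `x_1, …, x_t`). -/
def cnt (x : ℕ → 𝒳) (i : 𝒳) (t : ℕ) : ℕ :=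
  ((Finset.range t).filter fun τ => x τ = i).card

/-- `𝒜_t`: the set of symbols occurring among the first `t` symbols. -/
def alph (x : ℕ → 𝒳) (t : ℕ) : Finset 𝒳 := (Finset.range t).image x

/-- Predictive probability `S^{β⃗}(x_{t+1} = i | x_{1:t})`. -/
noncomputable def Spred (x : ℕ → 𝒳) (w : ℕ → 𝒳 → ℝ) (β : ℕ → ℝ) (t : ℕ) (i : 𝒳) : ℝ :=
  if 0 < cnt x i t then (cnt x i t : ℝ) / (t + β t) else β t * w t i / (t + β t)

/-- Joint probability `S^{β⃗}(x_{1:n})`. -/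
noncomputable def Sjoint (x : ℕ → 𝒳) (w : ℕ → 𝒳 → ℝ) (β : ℕ → ℝ) (n : ℕ) : ℝ :=
  ∏ t ∈ Finset.range n, Spred x w β t (x t)

/-- `𝒩`: the set of times `t ∈ {0,…,n-1}` at which a new symbol occurs. -/
def newTimes (x : ℕ → 𝒳) (n : ℕ) : Finset ℕ :=
  (Finset.range n).filter fun t => x t ∉ alph x t

/-- `CL_w(𝒜)`: code length of the used alphabet. -/
noncomputable def CLw (x : ℕ → 𝒳) (w : ℕ → 𝒳 → ℝ) (n : ℕ) : ℝ :=
  ∑ t ∈ newTimes x n, Real.log (1 / w t (x t))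

/-- Redundancy `R_S^{β⃗}(x_{1:n}) = ln(n^{-n} ∏_{j∈𝒜} n_j^{n_j}) - ln S^{β⃗}(x_{1:n})`. -/
noncomputable def Red (x : ℕ → 𝒳) (w : ℕ → 𝒳 → ℝ) (β : ℕ → ℝ) (n : ℕ) : ℝ :=
  Real.log (((n : ℝ) ^ n)⁻¹ * ∏ j ∈ alph x n, (cnt x j n : ℝ) ^ cnt x j n)
    - Real.log (Sjoint x w β n)

section RedAux
set_option maxHeartbeats 1000000

/-- `2u/(2+u) ≤ log(1+u)` for `u ≥ 0`. -/
lemma logIneqA {u : ℝ} (hu : 0 ≤ u) : 2*u/(2+u) ≤ Real.log (1+u) := by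
  have key : MonotoneOn (fun u : ℝ => Real.log (1+u) - 2*u/(2+u)) (Set.Ici 0) := by
    apply monotoneOn_of_deriv_nonneg (convex_Ici 0)
    · apply ContinuousOn.sub
      · exact (continuousOn_const.add continuousOn_id).log (fun x hx => by
          simp only [Set.mem_Ici, id, Pi.add_apply] at hx ⊢; intro h; nlinarith)
      · exact (continuousOn_const.mul continuousOn_id).div
          (continuousOn_const.add continuousOn_id) (fun x hx => by
          simp only [Set.mem_Ici, id] at hx ⊢; intro h; nlinarith)
    · intro x hx
      rw [interior_Ici] at hx
      have h1 : (0:ℝ) < x := hx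
      apply DifferentiableAt.differentiableWithinAt
      apply DifferentiableAt.sub
      · exact DifferentiableAt.log (by fun_prop) (by nlinarith)
      · exact DifferentiableAt.div (by fun_prop) (by fun_prop) (by nlinarith)
    · intro x hx
      rw [interior_Ici] at hx
      have h1 : (0:ℝ) < x := hx
      have hne1 : (1:ℝ) + x ≠ 0 := by nlinarith
      have hne2 : (2:ℝ) + x ≠ 0 := by nlinarith
      have d1 : HasDerivAt (fun u : ℝ => Real.log (1+u)) (1/(1+x)) x := by
        have := ((hasDerivAt_id x).const_add 1).log hne1
        simpa using this
      have d2 : HasDerivAt (fun u : ℝ => 2*u/(2+u)) ((2*1*(2+x) - 2*x*1)/(2+x)^2) x := by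
        have := (((hasDerivAt_id x).const_mul 2).div ((hasDerivAt_id x).const_add 2) hne2)
        exact this
      rw [(show HasDerivAt (fun u : ℝ => Real.log (1+u) - 2*u/(2+u)) _ x from d1.sub d2).deriv]
      rw [div_sub_div _ _ hne1 (by positivity)]
      apply div_nonneg _ (by positivity)
      nlinarith
  have h0 := key Set.self_mem_Ici (Set.mem_Ici.2 hu) hu
  simp only [add_zero, mul_zero, zero_div, Real.log_one, sub_zero, zero_sub] at h0
  linarith

/-- `log(1+u) ≤ u/2 + u/(2(1+u))` for `u ≥ 0`. -/
lemma logIneqB {u : ℝ} (hu : 0 ≤ u) : Real.log (1+u) ≤ u/2 + u/(2*(1+u)) := by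
  have key : MonotoneOn (fun u : ℝ => u/2 + u/(2*(1+u)) - Real.log (1+u)) (Set.Ici 0) := by
    apply monotoneOn_of_deriv_nonneg (convex_Ici 0)
    · apply ContinuousOn.sub
      · apply ContinuousOn.add (by fun_prop)
        exact continuousOn_id.div (continuousOn_const.mul (continuousOn_const.add continuousOn_id))
          (fun x hx => by simp only [Set.mem_Ici, id] at hx ⊢; intro h; nlinarith)
      · exact (continuousOn_const.add continuousOn_id).log (fun x hx => by
          simp only [Set.mem_Ici, id, Pi.add_apply] at hx ⊢; intro h; nlinarith)
    · intro x hx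
      rw [interior_Ici] at hx
      have h1 : (0:ℝ) < x := hx
      apply DifferentiableAt.differentiableWithinAt
      apply DifferentiableAt.sub
      · apply DifferentiableAt.add (by fun_prop)
        exact DifferentiableAt.div (by fun_prop) (by fun_prop) (by nlinarith)
      · exact DifferentiableAt.log (by fun_prop) (by nlinarith)
    · intro x hx
      rw [interior_Ici] at hx
      have h1 : (0:ℝ) < x := hx
      have hne1 : (1:ℝ) + x ≠ 0 := by nlinarith
      have hne2 : 2*(1+x) ≠ 0 := by nlinarith
      have d1 : HasDerivAt (fun u : ℝ => Real.log (1+u)) (1/(1+x)) x := by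
        have := ((hasDerivAt_id x).const_add 1).log hne1
        simpa using this
      have d2 : HasDerivAt (fun u : ℝ => u/2 + u/(2*(1+u)))
          (1/2 + (1*(2*(1+x)) - x*(2*1))/(2*(1+x))^2) x := by
        have h3 : HasDerivAt (fun u : ℝ => u/(2*(1+u))) ((1*(2*(1+x)) - x*(2*1))/(2*(1+x))^2) x := by
          have := (hasDerivAt_id x).div (((hasDerivAt_id x).const_add 1).const_mul 2) hne2
          exact this
        have := ((hasDerivAt_id x).div_const 2).add h3
        exact this
      rw [(show HasDerivAt (fun u : ℝ => u/2 + u/(2*(1+u)) - Real.log (1+u)) _ x from d2.sub d1).deriv]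
      have e1 : 1/2 + (1*(2*(1+x)) - x*(2*1))/(2*(1+x))^2 - 1/(1+x)
          = x^2 / (2*(1+x)^2) := by
        field_simp
        ring
      rw [e1]
      positivity
  have h0 := key Set.self_mem_Ici (Set.mem_Ici.2 hu) hu
  simp only [add_zero, mul_zero, zero_div, Real.log_one, sub_zero, zero_add, zero_div] at h0
  norm_num at h0
  linarith

/-- `(x+1/2) * log((x+1)/x) ≥ 1` for `x > 0`. -/
lemma lemA {x : ℝ} (hx : 0 < x) : 1 ≤ (x + 1/2) * Real.log ((x+1)/x) := by
  have h1 : (x+1)/x = 1 + 1/x := by field_simp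
  have h2 := logIneqA (u := 1/x) (by positivity)
  rw [h1]
  have h3 : 2*(1/x)/(2+1/x) = 2/(2*x+1) := by
    rw [div_eq_div_iff (by positivity) (by positivity)]; field_simp
  rw [h3] at h2
  have h4 : (x + 1/2) * (2/(2*x+1)) = 1 := by field_simp
  calc (1:ℝ) = (x + 1/2) * (2/(2*x+1)) := h4.symm
    _ ≤ (x + 1/2) * Real.log (1 + 1/x) := by
        apply mul_le_mul_of_nonneg_left h2 (by linarith)

/-- `log((x+1)/x) ≤ (1/x + 1/(x+1))/2` for `x > 0`. -/
lemma lemB {x : ℝ} (hx : 0 < x) : Real.log ((x+1)/x) ≤ 1/(2*x) + 1/(2*(x+1)) := by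
  have h1 : (x+1)/x = 1 + 1/x := by field_simp
  have h2 := logIneqB (u := 1/x) (by positivity)
  rw [h1]
  refine h2.trans (le_of_eq ?_)
  field_simp

/-- Stirling lower bound: `(N+1/2) log N - N + log √(2π) ≤ log N!` for `1 ≤ N`. -/
lemma stirling_lower {N : ℕ} (hN : 1 ≤ N) :
    ((N:ℝ) + 1/2) * Real.log N - N + Real.log (Real.sqrt (2*π)) ≤ Real.log (N.factorial) := by
  have hNpos : (0:ℝ) < N := by exact_mod_cast hN
  -- √π ≤ stirlingSeq N
  have hmono := Stirling.stirlingSeq'_antitone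
  have hlim : Tendsto (Stirling.stirlingSeq ∘ Nat.succ) atTop (nhds (Real.sqrt π)) :=
    Stirling.tendsto_stirlingSeq_sqrt_pi.comp (tendsto_add_atTop_nat 1)
  obtain ⟨M, hM⟩ : ∃ M, N = M + 1 := ⟨N - 1, by omega⟩
  have hs : Real.sqrt π ≤ Stirling.stirlingSeq N := by
    rw [hM]
    refine le_of_tendsto hlim ?_
    filter_upwards [eventually_ge_atTop M] with k hk
    exact hmono hk
  have hdef : Stirling.stirlingSeq N = (N.factorial : ℝ) / (Real.sqrt (2*N) * ((N:ℝ)/Real.exp 1)^N) := rfl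
  have hden : (0:ℝ) < Real.sqrt (2*N) * ((N:ℝ)/Real.exp 1)^N := by positivity
  have hfac : Real.sqrt π * (Real.sqrt (2*N) * ((N:ℝ)/Real.exp 1)^N) ≤ (N.factorial : ℝ) := by
    rw [hdef] at hs
    calc Real.sqrt π * (Real.sqrt (2*N) * ((N:ℝ)/Real.exp 1)^N)
        ≤ ((N.factorial : ℝ) / (Real.sqrt (2*N) * ((N:ℝ)/Real.exp 1)^N)) * (Real.sqrt (2*N) * ((N:ℝ)/Real.exp 1)^N) := by
          apply mul_le_mul_of_nonneg_right hs (le_of_lt hden)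
      _ = (N.factorial : ℝ) := by field_simp
  have hlog := Real.log_le_log (by positivity) hfac
  refine le_trans (le_of_eq ?_) hlog
  rw [Real.log_mul (by positivity) (by positivity), Real.log_mul (by positivity) (by positivity),
    Real.log_pow, Real.log_div (by positivity) (by positivity), Real.log_exp,
    Real.log_sqrt (by positivity), Real.log_sqrt (by positivity), Real.log_sqrt (by positivity),
    Real.log_mul (by norm_num) (ne_of_gt hNpos), Real.log_mul (by norm_num) (ne_of_gt Real.pi_pos)]
  ring

/-- Trapezoid bound for harmonic-type sums. -/
lemma trap {s : ℝ} (hs : 1 ≤ s) {N : ℕ} (hN : 1 ≤ N) :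
    Real.log (s + N - 1) - Real.log s + 1/(2*s) + 1/(2*(s + N - 1))
      ≤ ∑ t ∈ Finset.range N, (s + t)⁻¹ := by
  have hs0 : 0 < s := by linarith
  induction N, hN using Nat.le_induction with
  | base => simp only [Nat.cast_one, Finset.sum_range_one, Nat.cast_zero, add_zero]
            have : s + 1 - 1 = s := by ring
            rw [this, sub_self]
            have he : 0 + 1 / (2*s) + 1/(2*s) = s⁻¹ := by rw [inv_eq_one_div]; field_simp; ring
            rw [he]
  | succ N hN ih =>
    rw [Finset.sum_range_succ]
    have hx : (0:ℝ) < s + N - 1 := by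
      have : (1:ℝ) ≤ (N:ℝ) := by exact_mod_cast hN
      linarith
    have hkey := lemB hx
    have hlog : Real.log ((s + N - 1 + 1)/(s + N - 1)) = Real.log (s + N) - Real.log (s + N - 1) := by
      rw [Real.log_div (by linarith) (by linarith)]
      ring_nf
    have hcast : ((N:ℝ) + 1) = ((N + 1 : ℕ) : ℝ) := by push_cast; ring
    have e1 : s + ((N:ℕ):ℝ) + 1 - 1 = s + N := by push_cast; ring
    have goal_eq : s + ((N+1:ℕ):ℝ) - 1 = s + N := by push_cast; ring
    rw [goal_eq]
    have h2 : Real.log (s + N) - Real.log s + 1/(2*s) + 1/(2*(s+N))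
        ≤ (Real.log (s + N - 1) - Real.log s + 1/(2*s) + 1/(2*(s + N - 1))) + (s + (N:ℝ))⁻¹ := by
      have e2 : s + N - 1 + 1 = s + N := by ring
      rw [e2] at hkey hlog
      rw [hlog] at hkey
      have : (s+(N:ℝ))⁻¹ = 1/(s+N) := by rw [one_div]
      have hsn : (0:ℝ) < s + N := by positivity
      rw [this]
      have : 1/(2*(s+N-1)) + 1/(s+N) - 1/(2*(s+N)) = 1/(2*(s+N-1)) + 1/(2*(s+N)) := by
        field_simp
        ring
      linarith [hkey]
    exact le_trans h2 (by linarith [ih])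

/-- Finite-N lower bound for `∑ log(t+β)`. -/
lemma fin_bound {β : ℝ} (hβ : 1 ≤ β) {N : ℕ} (hN : 1 ≤ N) :
    ((N:ℝ) + β - 1/2) * Real.log ((N:ℝ) + β) - (β - 1/2) * Real.log β - N
      - (1 - Real.log (Real.sqrt (2*π))) + (1/2) * (Real.log N - Real.log ((N:ℝ)+β))
      ≤ ∑ t ∈ Finset.range N, Real.log ((t:ℝ) + β) := by
  have hNR : (1:ℝ) ≤ (N:ℝ) := by exact_mod_cast hN
  have hβ0 : (0:ℝ) < β := by linarith
  -- Step 1: split off log N!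
  have hsplit : ∑ t ∈ Finset.range N, Real.log ((t:ℝ) + β)
      = Real.log (N.factorial)
        + ∑ t ∈ Finset.range N, (Real.log ((t:ℝ) + β) - Real.log ((t:ℝ) + 1)) := by
    have hfact : Real.log (N.factorial) = ∑ t ∈ Finset.range N, Real.log ((t:ℝ) + 1) := by
      have : ((N.factorial : ℕ) : ℝ) = ∏ t ∈ Finset.range N, ((t:ℝ) + 1) := by
        rw [← Finset.prod_range_add_one_eq_factorial]
        push_cast
        ring
      rw [this, Real.log_prod]
      intro t ht
      positivity
    rw [hfact, ← Finset.sum_add_distrib]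
    congr 1
    ext t
    ring
  -- Step 2: each difference equals an integral
  have hint : ∀ t ∈ Finset.range N, Real.log ((t:ℝ) + β) - Real.log ((t:ℝ) + 1)
      = ∫ s in (1:ℝ)..β, (s + t)⁻¹ := by
    intro t _
    have ht0 : (0:ℝ) ≤ (t:ℝ) := Nat.cast_nonneg t
    rw [intervalIntegral.integral_comp_add_right (fun x => x⁻¹) (t:ℝ)]
    rw [integral_inv (by
      intro h
      rcases Set.mem_uIcc.1 h with ⟨h1, _⟩ | ⟨h1, _⟩ <;> nlinarith)]
    rw [Real.log_div (by nlinarith) (by nlinarith)]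
    ring_nf
  -- Step 3: sum of integrals = integral of sum; bound below
  have hii : ∀ t : ℕ, IntervalIntegrable (fun s : ℝ => (s + t)⁻¹) MeasureTheory.volume 1 β := by
    intro t
    apply ContinuousOn.intervalIntegrable
    apply ContinuousOn.inv₀ (by fun_prop)
    intro s hs
    rcases Set.mem_uIcc.1 hs with ⟨h1, _⟩ | ⟨h1, h2⟩
    · have := Nat.cast_nonneg (α := ℝ) t; nlinarith
    · have := Nat.cast_nonneg (α := ℝ) t; nlinarith
  have hsum_int : ∑ t ∈ Finset.range N, (Real.log ((t:ℝ) + β) - Real.log ((t:ℝ) + 1))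
      = ∫ s in (1:ℝ)..β, (∑ t ∈ Finset.range N, (s + t)⁻¹) := by
    rw [Finset.sum_congr rfl hint]
    exact (intervalIntegral.integral_finset_sum (fun t _ => hii t)).symm
  -- Step 4: lower bound integrand pointwise by trapezoid
  have hintegrand : ∀ s ∈ Set.Icc (1:ℝ) β,
      Real.log (s + N - 1) - Real.log s + 1/(2*s) ≤ ∑ t ∈ Finset.range N, (s + t)⁻¹ := by
    intro s hs
    have hs1 : 1 ≤ s := hs.1
    have h := trap hs1 hN
    have hpos : (0:ℝ) < s + N - 1 := by nlinarith
    have : 0 ≤ 1/(2*(s + N - 1)) := by positivity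
    linarith
  have hmono : ∫ s in (1:ℝ)..β, (Real.log (s + N - 1) - Real.log s + 1/(2*s))
      ≤ ∫ s in (1:ℝ)..β, (∑ t ∈ Finset.range N, (s + t)⁻¹) := by
    apply intervalIntegral.integral_mono_on hβ
    · apply ContinuousOn.intervalIntegrable
      apply ContinuousOn.add
      apply ContinuousOn.sub
      · apply ContinuousOn.log (by fun_prop)
        intro s hs
        rcases Set.mem_uIcc.1 hs with ⟨h1, _⟩ | ⟨h1, _⟩ <;> nlinarith
      · apply ContinuousOn.log (by fun_prop)
        intro s hs
        rcases Set.mem_uIcc.1 hs with ⟨h1, _⟩ | ⟨h1, _⟩ <;> nlinarith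
      · apply ContinuousOn.div continuousOn_const (by fun_prop)
        intro s hs
        rcases Set.mem_uIcc.1 hs with ⟨h1, _⟩ | ⟨h1, _⟩ <;> nlinarith
    · have := IntervalIntegrable.sum (μ := MeasureTheory.volume) (a := (1:ℝ)) (b := β)
        (Finset.range N) (f := fun (t:ℕ) (s:ℝ) => (s+(t:ℝ))⁻¹) (fun t _ => hii t)
      simpa [Finset.sum_fn] using this
    · exact hintegrand
  -- Step 5: evaluate the lower integral
  have hval : ∫ s in (1:ℝ)..β, (Real.log (s + N - 1) - Real.log s + 1/(2*s))
      = (((β:ℝ) + N - 1) * Real.log (β + N - 1) - N * Real.log N - β + 1)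
        - (β * Real.log β - β + 1) + (1/2) * Real.log β := by
    have i1 : ∫ s in (1:ℝ)..β, Real.log (s + ((N:ℝ) - 1))
        = (β + ((N:ℝ)-1)) * Real.log (β + ((N:ℝ)-1)) - (1 + ((N:ℝ)-1)) * Real.log (1 + ((N:ℝ)-1))
          - (β + ((N:ℝ)-1)) + (1 + ((N:ℝ)-1)) := by
      rw [intervalIntegral.integral_comp_add_right (fun x => Real.log x) ((N:ℝ) - 1)]
      rw [integral_log]
    have i2 : ∫ s in (1:ℝ)..β, Real.log s = β * Real.log β - 1 * Real.log 1 - β + 1 :=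
      integral_log
    have i3 : ∫ s in (1:ℝ)..β, 1/(2*s) = (1/2) * Real.log β := by
      have : ∀ s : ℝ, 1/(2*s) = (1/2) * s⁻¹ := by intro s; field_simp
      simp_rw [this]
      rw [intervalIntegral.integral_const_mul, integral_inv (by
        intro h
        rcases Set.mem_uIcc.1 h with ⟨h1, _⟩ | ⟨h1, _⟩ <;> nlinarith)]
      rw [div_one]
    have c1 : ContinuousOn (fun s : ℝ => Real.log (s + ((N:ℝ)-1))) (Set.uIcc 1 β) := by
      apply ContinuousOn.log (by fun_prop)
      intro s hs
      rcases Set.mem_uIcc.1 hs with ⟨h1, _⟩ | ⟨h1, _⟩ <;> nlinarith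
    have c2 : ContinuousOn (fun s : ℝ => Real.log s) (Set.uIcc 1 β) := by
      apply ContinuousOn.log (by fun_prop)
      intro s hs
      rcases Set.mem_uIcc.1 hs with ⟨h1, _⟩ | ⟨h1, _⟩ <;> nlinarith
    have c3 : ContinuousOn (fun s : ℝ => 1/(2*s)) (Set.uIcc 1 β) := by
      apply ContinuousOn.div continuousOn_const (by fun_prop)
      intro s hs
      rcases Set.mem_uIcc.1 hs with ⟨h1, _⟩ | ⟨h1, _⟩ <;> nlinarith
    have e0 : (fun s : ℝ => Real.log (s + N - 1) - Real.log s + 1/(2*s))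
        = (fun s : ℝ => (Real.log (s + ((N:ℝ)-1)) - Real.log s) + 1/(2*s)) := by
      ext s; ring_nf
    rw [e0]
    rw [intervalIntegral.integral_add (f := fun s => Real.log (s + ((N:ℝ)-1)) - Real.log s) ((c1.sub c2).intervalIntegrable) (c3.intervalIntegrable)]
    rw [intervalIntegral.integral_sub (c1.intervalIntegrable) (c2.intervalIntegrable)]
    rw [i1, i2, i3]
    have : (1:ℝ) + ((N:ℝ)-1) = N := by ring
    rw [this, Real.log_one]
    ring
  -- Step 6: combine
  have hst := stirling_lower hN
  have hfinal : ((N:ℝ) + β - 1) * Real.log ((N:ℝ) + β) - 1 ≤ ((N:ℝ)+β-1) * Real.log ((N:ℝ)+β-1) := by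
    have hM : (1:ℝ) < (N:ℝ) + β := by nlinarith
    have hM1 : (0:ℝ) < (N:ℝ) + β - 1 := by linarith
    have hy : Real.log (((N:ℝ)+β)/((N:ℝ)+β-1)) ≤ ((N:ℝ)+β)/((N:ℝ)+β-1) - 1 :=
      Real.log_le_sub_one_of_pos (by positivity)
    rw [Real.log_div (by positivity) (by positivity)] at hy
    have h2 : ((N:ℝ)+β)/((N:ℝ)+β-1) - 1 = 1/((N:ℝ)+β-1) := by field_simp; ring
    rw [h2] at hy
    have h3 : ((N:ℝ)+β-1) * (Real.log ((N:ℝ)+β) - Real.log ((N:ℝ)+β-1)) ≤ ((N:ℝ)+β-1) * (1/((N:ℝ)+β-1)) :=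
      mul_le_mul_of_nonneg_left hy (le_of_lt hM1)
    have h4 : ((N:ℝ)+β-1) * (1/((N:ℝ)+β-1)) = 1 := by field_simp
    nlinarith
  have hβN : β + (N:ℝ) - 1 = (N:ℝ) + β - 1 := by ring
  rw [hsplit, hsum_int]
  have key : (((β:ℝ) + N - 1) * Real.log (β + N - 1) - N * Real.log N - β + 1)
        - (β * Real.log β - β + 1) + (1/2) * Real.log β
      ≤ ∫ s in (1:ℝ)..β, (∑ t ∈ Finset.range N, (s + t)⁻¹) := hval ▸ hmono
  rw [hβN] at key
  nlinarith [key, hst, hfinal]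

/-- Key sum bound. -/
lemma sum_log_bound {β : ℝ} (hβ : 1 ≤ β) {n : ℕ} (hn : 1 ≤ n) :
    ((n:ℝ) + β - 1/2) * Real.log ((n:ℝ) + β) - (β - 1/2) * Real.log β - n
      - (1 - Real.log (Real.sqrt (2*π)))
      ≤ ∑ t ∈ Finset.range n, Real.log ((t:ℝ) + β) := by
  have hβ0 : (0:ℝ) < β := by linarith
  set c : ℝ := 1 - Real.log (Real.sqrt (2*π)) with hc
  set D : ℕ → ℝ := fun N => ∑ t ∈ Finset.range N, Real.log ((t:ℝ) + β)
    - (((N:ℝ) + β - 1/2) * Real.log ((N:ℝ) + β) - N) with hD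
  -- D is antitone on N ≥ n (in fact for all N)
  have hmono : ∀ N, D (N+1) ≤ D N := by
    intro N
    have hx : (0:ℝ) < (N:ℝ) + β := by positivity
    have hA := lemA hx
    have hlog : Real.log (((N:ℝ)+β+1)/((N:ℝ)+β)) = Real.log ((N:ℝ)+β+1) - Real.log ((N:ℝ)+β) :=
      Real.log_div (by positivity) (by positivity)
    rw [hlog] at hA
    simp only [hD]
    rw [Finset.sum_range_succ]
    push_cast
    have e : (N:ℝ)+1+β = (N:ℝ)+β+1 := by ring
    rw [e]
    nlinarith
  have hmono' : ∀ N M, N ≤ M → D M ≤ D N := by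
    intro N M h
    induction M, h using Nat.le_induction with
    | base => exact le_refl _
    | succ M hM ih => exact le_trans (hmono M) ih
  -- limit of the error term
  have hlim : Tendsto (fun N : ℕ => (1/2) * (Real.log N - Real.log ((N:ℝ)+β))) atTop (nhds 0) := by
    have h1 : Tendsto (fun N : ℕ => β / (N:ℝ)) atTop (nhds 0) :=
      tendsto_const_div_atTop_nhds_zero_nat β
    have h2 : Tendsto (fun N : ℕ => Real.log (1 + β/(N:ℝ))) atTop (nhds 0) := by
      have : Tendsto (fun N : ℕ => 1 + β/(N:ℝ)) atTop (nhds 1) := by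
        simpa using tendsto_const_nhds.add h1
      have hcont := (Real.continuousAt_log (by norm_num : (1:ℝ) ≠ 0)).tendsto
      simpa [Real.log_one, Function.comp_def] using hcont.comp this
    have heq : ∀ᶠ N : ℕ in atTop, Real.log ((N:ℝ)) - Real.log ((N:ℝ)+β)
        = -Real.log (1 + β/(N:ℝ)) := by
      filter_upwards [eventually_ge_atTop 1] with N hN
      have hN0 : (0:ℝ) < (N:ℝ) := by exact_mod_cast hN
      rw [← Real.log_div (by positivity) (by positivity)]
      have : (1:ℝ) + β/(N:ℝ) = ((N:ℝ)+β)/(N:ℝ) := by field_simp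
      rw [this, ← Real.log_inv]
      congr 1
      field_simp
    have : Tendsto (fun N : ℕ => Real.log ((N:ℝ)) - Real.log ((N:ℝ)+β)) atTop (nhds 0) := by
      apply Tendsto.congr' (heq.mono (fun N h => h.symm))
      simpa using h2.neg
    have := this.const_mul (1/2)
    simp only [mul_zero] at this
    exact this
  -- conclude
  have hev : ∀ᶠ N : ℕ in atTop,
      (-(β - 1/2) * Real.log β - c) + (1/2) * (Real.log N - Real.log ((N:ℝ)+β)) ≤ D n := by
    filter_upwards [eventually_ge_atTop n, eventually_ge_atTop 1] with N hNn hN1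
    have := fin_bound hβ hN1
    have hDN : (-(β - 1/2) * Real.log β - c) + (1/2) * (Real.log N - Real.log ((N:ℝ)+β)) ≤ D N := by
      simp only [hD]
      linarith
    exact le_trans hDN (hmono' n N hNn)
  have hlim2 : Tendsto (fun N : ℕ => (-(β - 1/2) * Real.log β - c)
      + (1/2) * (Real.log N - Real.log ((N:ℝ)+β))) atTop
      (nhds ((-(β - 1/2) * Real.log β - c) + 0)) :=
    tendsto_const_nhds.add hlim
  have hfin := le_of_tendsto hlim2 hev
  simp only [add_zero] at hfin
  have h3 : -(β - 1/2) * Real.log β - c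
      ≤ ∑ t ∈ Finset.range n, Real.log ((t:ℝ) + β)
        - (((n:ℝ) + β - 1/2) * Real.log ((n:ℝ) + β) - n) := by
    simpa [hD] using hfin
  linarith

lemma log_factorial_le {k : ℕ} (hk : 1 ≤ k) :
    Real.log k.factorial ≤ ((k:ℝ) + 1/2) * Real.log k - k + 1 := by
  induction k, hk using Nat.le_induction with
  | base => simp
  | succ k hk ih =>
    have hk0 : (0:ℝ) < (k:ℝ) := by exact_mod_cast hk
    have hA := lemA hk0
    rw [Real.log_div (by positivity) (by positivity)] at hA
    have hfac : Real.log ((k+1).factorial) = Real.log ((k:ℝ)+1) + Real.log (k.factorial) := by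
      rw [Nat.factorial_succ]
      push_cast
      rw [Real.log_mul (by positivity) (by
        exact_mod_cast Nat.cast_ne_zero.2 (Nat.factorial_ne_zero k))]
    rw [hfac]
    push_cast
    nlinarith

/-- Per-symbol inequality. -/
lemma per_symbol {k : ℕ} (hk : 1 ≤ k) :
    (1/2) * Real.log k + (k:ℝ) - 1 ≤ (k:ℝ) * Real.log k - Real.log ((k-1).factorial) := by
  have hk0 : (0:ℝ) < (k:ℝ) := by exact_mod_cast hk
  have hfac : Real.log (k.factorial) = Real.log ((k-1).factorial) + Real.log k := by
    obtain ⟨m, rfl⟩ : ∃ m, k = m + 1 := ⟨k - 1, by omega⟩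
    rw [Nat.factorial_succ]
    simp only [Nat.add_sub_cancel]
    push_cast
    rw [Real.log_mul (by positivity) (by
      exact_mod_cast Nat.cast_ne_zero.2 (Nat.factorial_ne_zero m))]
    ring
  have h := log_factorial_le hk
  rw [hfac] at h
  linarith

lemma mem_alph_iff {x : ℕ → 𝒳} {i : 𝒳} {t : ℕ} : i ∈ alph x t ↔ 0 < cnt x i t := by
  rw [alph, cnt, Finset.card_pos, Finset.filter_nonempty_iff]
  constructor
  · intro h
    obtain ⟨τ, hτ, he⟩ := Finset.mem_image.1 h
    exact ⟨τ, hτ, he⟩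
  · rintro ⟨τ, hτ, he⟩
    exact Finset.mem_image.2 ⟨τ, hτ, he⟩

lemma cnt_succ (x : ℕ → 𝒳) (i : 𝒳) (t : ℕ) :
    cnt x i (t+1) = cnt x i t + if x t = i then 1 else 0 := by
  rw [cnt, cnt, Finset.range_add_one, Finset.filter_insert]
  split
  · rw [Finset.card_insert_of_notMem (fun h => by
      exact absurd (Finset.mem_of_mem_filter t h) (Finset.notMem_range_self))]
  · rw [add_zero]

lemma alph_succ (x : ℕ → 𝒳) (n : ℕ) : alph x (n+1) = insert (x n) (alph x n) := by
  rw [alph, alph, Finset.range_add_one, Finset.image_insert]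

lemma not_mem_newTimes_self (x : ℕ → 𝒳) (n : ℕ) : n ∉ newTimes x n := fun hc =>
  absurd (Finset.mem_of_mem_filter n hc) Finset.notMem_range_self

lemma newTimes_succ (x : ℕ → 𝒳) (n : ℕ) :
    newTimes x (n+1) = if x n ∉ alph x n then insert n (newTimes x n) else newTimes x n := by
  simp only [newTimes, Finset.range_add_one, Finset.filter_insert]

lemma card_newTimes (x : ℕ → 𝒳) (n : ℕ) : (newTimes x n).card = (alph x n).card := by
  induction n with
  | zero => simp [newTimes, alph]
  | succ n ih =>
    rw [newTimes_succ, alph_succ]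
    by_cases h : x n ∈ alph x n
    · rw [if_neg (not_not_intro h), Finset.insert_eq_self.2 h]
      exact ih
    · rw [if_pos h, Finset.card_insert_of_notMem (not_mem_newTimes_self x n),
        Finset.card_insert_of_notMem h, ih]

lemma sum_cnt (x : ℕ → 𝒳) (n : ℕ) : ∑ j ∈ alph x n, cnt x j n = n := by
  have := Finset.card_eq_sum_card_fiberwise
    (f := x) (s := Finset.range n) (t := alph x n)
    (fun a ha => Finset.mem_image_of_mem x ha)
  rw [Finset.card_range] at this
  conv_rhs => rw [this]
  rfl

lemma cnt_pos_of_mem {x : ℕ → 𝒳} {j : 𝒳} {n : ℕ} (h : j ∈ alph x n) : 1 ≤ cnt x j n :=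
  mem_alph_iff.1 h

lemma prod_old (x : ℕ → 𝒳) (n : ℕ) :
    ∏ t ∈ (Finset.range n).filter (fun t => ¬ (x t ∉ alph x t)), cnt x (x t) t
      = ∏ j ∈ alph x n, (cnt x j n - 1).factorial := by
  induction n with
  | zero => simp [alph]
  | succ n ih =>
    rw [Finset.range_add_one, Finset.filter_insert, alph_succ]
    by_cases h : x n ∈ alph x n
    · rw [if_pos (fun hno => hno h)]
      rw [Finset.prod_insert (fun hc =>
        absurd (Finset.mem_of_mem_filter n hc) Finset.notMem_range_self)]
      rw [Finset.insert_eq_self.2 h]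
      have hc1 : 1 ≤ cnt x (x n) n := cnt_pos_of_mem h
      have h1 : cnt x (x n) (n+1) = cnt x (x n) n + 1 := by rw [cnt_succ]; simp
      have h2 : ∀ j ∈ (alph x n).erase (x n),
          (cnt x j (n+1) - 1).factorial = (cnt x j n - 1).factorial := by
        intro j hj
        have hne : x n ≠ j := fun heq => (Finset.mem_erase.1 hj).1 heq.symm
        rw [cnt_succ, if_neg hne, add_zero]
      rw [← Finset.mul_prod_erase _ _ h, Finset.prod_congr rfl h2, h1]
      have h3 : (cnt x (x n) n + 1 - 1).factorial
          = cnt x (x n) n * (cnt x (x n) n - 1).factorial := by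
        obtain ⟨m, hm⟩ : ∃ m, cnt x (x n) n = m + 1 := ⟨cnt x (x n) n - 1, by omega⟩
        rw [hm]
        simp [Nat.factorial_succ]
      rw [h3, ih, ← Finset.mul_prod_erase _ (fun j => (cnt x j n - 1).factorial) h]
      ring
    · rw [if_neg (fun hcon => hcon h)]
      rw [Finset.prod_insert h]
      have h1 : cnt x (x n) (n+1) = 1 := by
        rw [cnt_succ, if_pos rfl]
        have h0 : cnt x (x n) n = 0 := by
          by_contra hc
          exact h (mem_alph_iff.2 (Nat.pos_of_ne_zero hc))
        omega
      have h2 : ∀ j ∈ alph x n, (cnt x j (n+1) - 1).factorial = (cnt x j n - 1).factorial := by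
        intro j hj
        have hne : x n ≠ j := fun heq => h (heq ▸ hj)
        rw [cnt_succ, if_neg hne, add_zero]
      rw [h1, Finset.prod_congr rfl h2, ih]
      simp

end RedAux

/-- lower bound of Proposition 1, Eq. (9), valid for `β ≥ 1`. -/
theorem red_lower_bound
    (n : ℕ) (hn : 1 ≤ n) (x : ℕ → 𝒳) (w : ℕ → 𝒳 → ℝ)
    (hw : ∀ t i, 0 < w t i)
    (hwsum : ∀ t, ∑ k ∈ Finset.univ \ alph x t, w t k ≤ 1)
    (β : ℝ) (hβ : 1 ≤ β) :
    Red x w (fun _ => β) n ≥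
      CLw x w n - (alph x n).card * Real.log β
      + ∑ j ∈ alph x n, (1/2) * Real.log ((cnt x j n : ℝ) / (2 * π))
      + n * Real.log (1 + β / n) + (β - 1/2) * Real.log (n / β + 1)
      + (1 - Real.log (Real.sqrt (2 * π)))
      - (1 - Real.log (Real.sqrt (2 * π))) * ((alph x n).card + 2) := by
  classical
  have hβ0 : (0:ℝ) < β := by linarith
  have hnR : (1:ℝ) ≤ (n:ℝ) := by exact_mod_cast hn
  have hnpos : (0:ℝ) < (n:ℝ) := by linarith
  have hcnt1 : ∀ j ∈ alph x n, 1 ≤ cnt x j n := fun j hj => cnt_pos_of_mem hj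
  -- log of first factor of Red
  have hprod_ne : (∏ j ∈ alph x n, (cnt x j n : ℝ) ^ cnt x j n) ≠ 0 := by
    apply Finset.prod_ne_zero_iff.2
    intro j hj
    have := hcnt1 j hj
    positivity
  have hterm1 : Real.log (((n:ℝ)^n)⁻¹ * ∏ j ∈ alph x n, (cnt x j n : ℝ) ^ cnt x j n)
      = -((n:ℝ) * Real.log n)
        + ∑ j ∈ alph x n, (cnt x j n : ℝ) * Real.log (cnt x j n) := by
    rw [Real.log_mul (by positivity) hprod_ne, Real.log_inv, Real.log_pow,
      Real.log_prod (fun j hj => by have := hcnt1 j hj; positivity)]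
    congr 1
    apply Finset.sum_congr rfl
    intro j hj
    rw [Real.log_pow]
  -- positivity of predictive probabilities
  have hSpred_pos : ∀ t, 0 < Spred x w (fun _ => β) t (x t) := by
    intro t
    have htβ : (0:ℝ) < (t:ℝ) + β := by positivity
    rw [Spred]
    split
    · apply div_pos _ htβ
      next hpos => exact_mod_cast hpos
    · exact div_pos (mul_pos hβ0 (hw t (x t))) htβ
  -- log of each predictive probability
  have hlogpred : ∀ t ∈ Finset.range n, Real.log (Spred x w (fun _ => β) t (x t))
      = (if x t ∉ alph x t then Real.log β + Real.log (w t (x t))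
          else Real.log ((cnt x (x t) t : ℝ))) - Real.log ((t:ℝ) + β) := by
    intro t _
    have htβ : (0:ℝ) < (t:ℝ) + β := by positivity
    rw [Spred]
    by_cases hmem : x t ∈ alph x t
    · rw [if_pos (mem_alph_iff.1 hmem), if_neg (not_not_intro hmem)]
      have hc : (0:ℝ) < (cnt x (x t) t : ℝ) := by exact_mod_cast mem_alph_iff.1 hmem
      rw [Real.log_div hc.ne' htβ.ne']
    · rw [if_neg (fun hpos => hmem (mem_alph_iff.2 hpos)), if_pos hmem]
      rw [Real.log_div (mul_pos hβ0 (hw t (x t))).ne' htβ.ne',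
        Real.log_mul hβ0.ne' (hw t (x t)).ne']
  -- log of the joint probability
  have hlogS : Real.log (Sjoint x w (fun _ => β) n)
      = ∑ t ∈ Finset.range n, Real.log (Spred x w (fun _ => β) t (x t)) :=
    Real.log_prod (fun t _ => (hSpred_pos t).ne')
  rw [Finset.sum_congr rfl hlogpred, Finset.sum_sub_distrib, Finset.sum_ite] at hlogS
  have hnew_eq : (Finset.range n).filter (fun t => x t ∉ alph x t) = newTimes x n := rfl
  rw [hnew_eq] at hlogS
  -- new-symbol part
  have hnewsum : ∑ t ∈ newTimes x n, (Real.log β + Real.log (w t (x t)))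
      = ((alph x n).card : ℝ) * Real.log β - CLw x w n := by
    rw [Finset.sum_add_distrib, Finset.sum_const, ← card_newTimes x n]
    have hclw : CLw x w n = -∑ t ∈ newTimes x n, Real.log (w t (x t)) := by
      rw [CLw, ← Finset.sum_neg_distrib]
      apply Finset.sum_congr rfl
      intro t _
      rw [one_div, Real.log_inv]
    rw [hclw, nsmul_eq_mul]
    ring
  -- old-symbol part
  have holdsum : ∑ t ∈ (Finset.range n).filter (fun t => ¬(x t ∉ alph x t)),
        Real.log ((cnt x (x t) t : ℝ))
      = ∑ j ∈ alph x n, Real.log (((cnt x j n - 1).factorial : ℝ)) := by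
    rw [← Real.log_prod (fun t ht => by
        have hmem : x t ∈ alph x t := not_not.1 (Finset.mem_filter.1 ht).2
        have := mem_alph_iff.1 hmem
        positivity),
      ← Real.log_prod (fun j _ => by
        have := Nat.factorial_pos (cnt x j n - 1)
        positivity)]
    congr 1
    rw [← Nat.cast_prod, ← Nat.cast_prod]
    exact_mod_cast congrArg (fun k : ℕ => (k : ℝ)) (prod_old x n)
  rw [hnewsum, holdsum] at hlogS
  -- the redundancy identity
  have hred : Red x w (fun _ => β) n
      = CLw x w n - ((alph x n).card : ℝ) * Real.log β
        + (∑ t ∈ Finset.range n, Real.log ((t:ℝ) + β)) - (n:ℝ) * Real.log n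
        + ∑ j ∈ alph x n, ((cnt x j n : ℝ) * Real.log (cnt x j n)
            - Real.log (((cnt x j n - 1).factorial : ℝ))) := by
    rw [Red, hterm1, hlogS, Finset.sum_sub_distrib]
    ring
  -- analytic bound for the time sum
  have hsum := sum_log_bound hβ hn
  -- per-symbol bound, summed
  have hps : ∑ j ∈ alph x n, ((1/2) * Real.log ((cnt x j n : ℝ)) + (cnt x j n : ℝ) - 1)
      ≤ ∑ j ∈ alph x n, ((cnt x j n : ℝ) * Real.log (cnt x j n)
          - Real.log (((cnt x j n - 1).factorial : ℝ))) := by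
    apply Finset.sum_le_sum
    intro j hj
    exact per_symbol (hcnt1 j hj)
  have hps2 : ∑ j ∈ alph x n, ((1/2) * Real.log ((cnt x j n : ℝ)) + (cnt x j n : ℝ) - 1)
      = (∑ j ∈ alph x n, (1/2) * Real.log ((cnt x j n : ℝ))) + (n:ℝ) - ((alph x n).card : ℝ) := by
    rw [Finset.sum_sub_distrib, Finset.sum_add_distrib, Finset.sum_const]
    have hsc : ∑ j ∈ alph x n, (cnt x j n : ℝ) = (n:ℝ) := by
      rw [← Nat.cast_sum]
      exact_mod_cast congrArg (fun k : ℕ => (k : ℝ)) (sum_cnt x n)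
    rw [hsc, nsmul_eq_mul, mul_one]
  -- RHS rewrites
  have he1 : ∑ j ∈ alph x n, (1/2) * Real.log ((cnt x j n : ℝ) / (2 * π))
      = (∑ j ∈ alph x n, (1/2) * Real.log ((cnt x j n : ℝ)))
        - ((alph x n).card : ℝ) * Real.log (Real.sqrt (2*π)) := by
    have hstep : ∀ j ∈ alph x n, (1/2) * Real.log ((cnt x j n : ℝ) / (2 * π))
        = (1/2) * Real.log ((cnt x j n : ℝ)) - Real.log (Real.sqrt (2*π)) := by
      intro j hj
      have hc : (0:ℝ) < (cnt x j n : ℝ) := by exact_mod_cast hcnt1 j hj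
      rw [Real.log_div hc.ne' (by positivity), Real.log_sqrt (by positivity)]
      ring
    rw [Finset.sum_congr rfl hstep, Finset.sum_sub_distrib, Finset.sum_const, nsmul_eq_mul]
  have he2 : Real.log (1 + β / n) = Real.log ((n:ℝ) + β) - Real.log n := by
    rw [← Real.log_div (by positivity) (by positivity)]
    congr 1
    field_simp
  have he3 : Real.log ((n:ℝ) / β + 1) = Real.log ((n:ℝ) + β) - Real.log β := by
    rw [← Real.log_div (by positivity) (by positivity)]
    congr 1
    field_simp
  rw [ge_iff_le, he1, he2, he3, hred]
  nlinarith [hsum, le_trans (le_of_eq hps2.symm) hps]
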